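/- arXiv:0706.1077 — 5 statements merged into one kernel-verified Lean document; each statement's English description precedes it below -/
import Mathlib

section
/- For each fixed r ∈ (0, 1], define H(x, r) = (r·cos(2x)·sin(2r) + 2r²)/(cos x)². Then x ↦ H(x, r) is antitone (nonincreasing) on (−π/4, 0] and monotone (nondecreasing) on [0, π/4). Consequently, setting W(x, r) = [cos(2x)·sin(2r)/2 + r] / [2·(cos x)²·(sin r)²/r], one has W(x, r) ≤ r²/(sin r)² for all x ∈ (−π/4, π/4) and all r ∈ (0, 1]. -/
open Real Set

noncomputable def Hfun (x r : ℝ) : ℝ :=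
  (r * Real.cos (2 * x) * Real.sin (2 * r) + 2 * r ^ 2) / (Real.cos x) ^ 2

noncomputable def Wfun (x r : ℝ) : ℝ :=
  (Real.cos (2 * x) * Real.sin (2 * r) / 2 + r) / (2 * (Real.cos x) ^ 2 * (Real.sin r) ^ 2 / r)

/-!
Since `cos (2x) = 2 cos² x - 1`, `H(x, r) = 2 r sin (2r) + r (2r - sin (2r)) / cos² x`, and the
coefficient `r (2r - sin (2r))` is nonnegative because `|sin y| ≤ |y|`. So `H(·, r)` moves like
`1 / cos²`, which is even and increasing on `[0, π/2)`. For the bound, `W = H / (4 sin² r)`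
identically, and `H ≤ 4 r²` amounts to `r sin (2r) cos (2x) ≤ 2 r² cos (2x)`, which holds as
soon as `cos (2x) ≥ 0`.
-/

lemma mul_sin_two_mul_le (r : ℝ) : r * sin (2 * r) ≤ 2 * r ^ 2 :=
  calc r * sin (2 * r) ≤ |r| * |sin (2 * r)| := by rw [← abs_mul]; exact le_abs_self _
    _ ≤ |r| * |2 * r| := mul_le_mul_of_nonneg_left abs_sin_le_abs (abs_nonneg r)
    _ = 2 * r ^ 2 := by rw [abs_mul, abs_two, ← mul_assoc, mul_comm |r| 2, mul_assoc,
        abs_mul_abs_self, sq]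

lemma monotoneOn_inv_cos_sq : MonotoneOn (fun x => (cos x ^ 2)⁻¹) (Ico 0 (π / 2)) := by
  intro a ha b hb hab
  have hcb : 0 < cos b := cos_pos_of_mem_Ioo ⟨by linarith [hb.1, pi_pos], hb.2⟩
  have hba : cos b ≤ cos a := cos_le_cos_of_nonneg_of_le_pi ha.1 (by linarith [hb.2, pi_pos]) hab
  dsimp only
  gcongr

lemma antitoneOn_inv_cos_sq : AntitoneOn (fun x => (cos x ^ 2)⁻¹) (Ioc (-(π / 2)) 0) := by
  intro a ha b hb hab
  have := monotoneOn_inv_cos_sq (a := -b) (b := -a) ⟨by linarith [hb.2], by linarith [hb.1]⟩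
    ⟨by linarith [ha.2], by linarith [ha.1]⟩ (by linarith)
  simpa only [cos_neg] using this

lemma Hfun_eq_add_mul_inv_cos_sq {x : ℝ} (r : ℝ) (hx : cos x ≠ 0) :
    Hfun x r = 2 * r * sin (2 * r) + r * (2 * r - sin (2 * r)) * (cos x ^ 2)⁻¹ := by
  unfold Hfun
  rw [cos_two_mul]
  field_simp
  ring

lemma monotoneOn_Hfun (r : ℝ) : MonotoneOn (fun x => Hfun x r) (Ico 0 (π / 2)) := by
  intro a ha b hb hab
  have hca : cos a ≠ 0 := (cos_pos_of_mem_Ioo ⟨by linarith [ha.1, pi_pos], ha.2⟩).ne'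
  have hcb : cos b ≠ 0 := (cos_pos_of_mem_Ioo ⟨by linarith [hb.1, pi_pos], hb.2⟩).ne'
  have hcoef : 0 ≤ r * (2 * r - sin (2 * r)) := by nlinarith [mul_sin_two_mul_le r]
  simp only [Hfun_eq_add_mul_inv_cos_sq r hca, Hfun_eq_add_mul_inv_cos_sq r hcb]
  exact add_le_add_right (mul_le_mul_of_nonneg_left (monotoneOn_inv_cos_sq ha hb hab) hcoef) _

lemma antitoneOn_Hfun (r : ℝ) : AntitoneOn (fun x => Hfun x r) (Ioc (-(π / 2)) 0) := by
  intro a ha b hb hab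
  have hca : cos a ≠ 0 := (cos_pos_of_mem_Ioo ⟨ha.1, by linarith [ha.2, pi_pos]⟩).ne'
  have hcb : cos b ≠ 0 := (cos_pos_of_mem_Ioo ⟨hb.1, by linarith [hb.2, pi_pos]⟩).ne'
  have hcoef : 0 ≤ r * (2 * r - sin (2 * r)) := by nlinarith [mul_sin_two_mul_le r]
  simp only [Hfun_eq_add_mul_inv_cos_sq r hca, Hfun_eq_add_mul_inv_cos_sq r hcb]
  exact add_le_add_right (mul_le_mul_of_nonneg_left (antitoneOn_inv_cos_sq ha hb hab) hcoef) _

lemma Hfun_le {x : ℝ} (r : ℝ) (hx : x ∈ Icc (-(π / 4)) (π / 4)) : Hfun x r ≤ 4 * r ^ 2 := by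
  have hcx : 0 < cos x := cos_pos_of_mem_Ioo ⟨by linarith [hx.1, pi_pos], by linarith [hx.2, pi_pos]⟩
  have hc2x : 0 ≤ cos (2 * x) := cos_nonneg_of_mem_Icc ⟨by linarith [hx.1], by linarith [hx.2]⟩
  unfold Hfun
  rw [div_le_iff₀ (by positivity), show 4 * r ^ 2 * cos x ^ 2 = 2 * r ^ 2 * cos (2 * x) + 2 * r ^ 2
    by rw [cos_two_mul]; ring]
  nlinarith [mul_le_mul_of_nonneg_right (mul_sin_two_mul_le r) hc2x]

lemma Wfun_eq_Hfun_div (x r : ℝ) : Wfun x r = Hfun x r / (4 * sin r ^ 2) := by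
  unfold Wfun Hfun
  rw [div_div_eq_mul_div, div_div, ← mul_div_mul_left _ _ (two_ne_zero' ℝ)]
  congr 1 <;> ring

theorem Hfun_antitone_monotone_and_Wfun_le_general (r : ℝ) :
    AntitoneOn (fun x => Hfun x r) (Ioc (-(π / 4)) 0) ∧
    MonotoneOn (fun x => Hfun x r) (Ico 0 (π / 4)) ∧
    ∀ x ∈ Ioo (-(π / 4)) (π / 4), Wfun x r ≤ r ^ 2 / (Real.sin r) ^ 2 := by
  have hπ : π / 4 ≤ π / 2 := by linarith [pi_pos]
  refine ⟨(antitoneOn_Hfun r).mono (Ioc_subset_Ioc_left (neg_le_neg hπ)),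
    (monotoneOn_Hfun r).mono (Ico_subset_Ico_right hπ), fun x hx => ?_⟩
  calc Wfun x r = Hfun x r / (4 * sin r ^ 2) := Wfun_eq_Hfun_div x r
    _ ≤ 4 * r ^ 2 / (4 * sin r ^ 2) := by gcongr; exact Hfun_le r (Ioo_subset_Icc_self hx)
    _ = r ^ 2 / sin r ^ 2 := mul_div_mul_left _ _ four_ne_zero

/-- For each fixed `r ∈ (0,1]`, `x ↦ H(x,r)` is antitone on `(-π/4, 0]` and monotone on
`[0, π/4)`; consequently `W(x,r) ≤ r²/(sin r)²` for all `x ∈ (-π/4, π/4)`. -/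
theorem Hfun_antitone_monotone_and_Wfun_le (r : ℝ) (hr : r ∈ Ioc (0 : ℝ) 1) :
    AntitoneOn (fun x => Hfun x r) (Ioc (-(π / 4)) 0) ∧
    MonotoneOn (fun x => Hfun x r) (Ico 0 (π / 4)) ∧
    ∀ x ∈ Ioo (-(π / 4)) (π / 4), Wfun x r ≤ r ^ 2 / (Real.sin r) ^ 2 :=
  Hfun_antitone_monotone_and_Wfun_le_general r
end

section
/- For every real x and every r > 0 such that both x − r and x + r lie in (−π/4, π/4), one has ∫_{x−r}^{x+r} (1 + (cos s)²) ds ≤ (r²/(sin r)²) · G²/(2r), where G² = min{ (2r)² + (sin(x+r) − sin(x−r))², (sin(x+r) − (x−r))² + ((x+r) − sin(x−r))² }. (Equivalently: the two-valued function u(x) = [[x]] + [[sin x]] on (−π/4, π/4) is a Dirichlet ω-minimizer with gauge ω(r) = r²/(sin r)² − 1, and its Dirichlet energy over (x−r, x+r) equals ∫ (1 + cos²).) -/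
/-!
The energy over `(x - r, x + r)` is `3r + cos 2x · sin r cos r`, and the squared Almgren
distance is attained either by the straight matching `x ↦ x, sin x ↦ sin x`, with value
`4r² + 4 cos² x sin² r`, or by the crossed one. Against the straight matching the inequality
reduces to `sin r ≤ r` and `sin r cos r ≤ r`. The crossed matching is the shorter one only when
`(x - r)(x + r) ≤ 0`, since `t - sin t` has the sign of `t`; then `|x| ≤ r`, so
`cos r ≤ cos x`, and the inequality reduces to `2 sin² r (1 + cos² r) ≤ (r + sin r cos r)²`,
a consequence of the Taylor bounds `r - r³/6 < sin r` and `1 - r²/2 ≤ cos r`.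
-/

open Real Set

lemma integral_one_add_cos_sq_symm (x r : ℝ) :
    ∫ s in (x - r)..(x + r), (1 + cos s ^ 2) = 3 * r + cos (2 * x) * (sin r * cos r) := by
  rw [intervalIntegral.integral_add intervalIntegrable_const
      ((by fun_prop : Continuous fun s ↦ cos s ^ 2).intervalIntegrable _ _),
    intervalIntegral.integral_const, integral_cos_sq, smul_eq_mul, sin_add, sin_sub, cos_add,
    cos_sub, cos_two_mul]
  linear_combination (-(sin r * cos r)) * sin_sq_add_cos_sq x

lemma sin_mul_cos_le_self {r : ℝ} (hr : 0 ≤ r) : sin r * cos r ≤ r := by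
  have := sin_le (by positivity : 0 ≤ 2 * r)
  rw [sin_two_mul] at this
  linarith

lemma mul_nonpos_of_crossed_le {a b : ℝ}
    (h : (sin b - a) ^ 2 + (b - sin a) ^ 2 ≤ (b - a) ^ 2 + (sin b - sin a) ^ 2) :
    a * b ≤ 0 := by
  -- crossed minus straight squared distance is `2 (a - sin a) (b - sin b)`
  have hsign : (a - sin a) * (b - sin b) ≤ 0 := by nlinarith
  by_contra! hab
  rcases pos_and_pos_or_neg_and_neg_of_mul_pos hab with ⟨ha, hb⟩ | ⟨ha, hb⟩
  · nlinarith [sin_lt ha, sin_lt hb]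
  · nlinarith [lt_sin ha, lt_sin hb]

lemma sin_quartic_nonneg {r : ℝ} (hr : 0 < r) (hr1 : r ≤ 1) :
    0 ≤ r ^ 2 + 2 * r * sin r - r ^ 3 * sin r - 3 * sin r ^ 2 + sin r ^ 4 := by
  set e := r - sin r
  have he : 0 ≤ e := sub_nonneg.2 (sin_le hr.le)
  have he' : e < r ^ 3 / 6 := by linarith [sin_gt_sub_cube hr]
  have hr2 : r ^ 2 ≤ 1 := by nlinarith
  have hlin : 0 ≤ 4 * r - 3 * r ^ 3 - 3 * e := by nlinarith [mul_nonneg hr.le (sub_nonneg.2 hr2)]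
  have hid : r ^ 2 + 2 * r * sin r - r ^ 3 * sin r - 3 * sin r ^ 2 + sin r ^ 4 =
      e * (4 * r - 3 * r ^ 3 - 3 * e) + e ^ 2 * ((2 * r - e) ^ 2 + 2 * r ^ 2) := by
    simp only [e]; ring
  rw [hid]
  positivity

lemma two_mul_sin_sq_mul_one_add_sq_le {r c : ℝ} (hr : 0 < r) (hr1 : r ≤ 1)
    (hc : cos r ≤ c) (hc1 : c ≤ 1) :
    2 * sin r ^ 2 * (1 + c ^ 2) ≤ (r + c * sin r) ^ 2 := by
  have hs : 0 ≤ sin r := sin_nonneg_of_nonneg_of_le_pi hr.le (by linarith [pi_gt_three])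
  have hsr : sin r ≤ r := sin_le hr.le
  have hcos : 2 * r * sin r * (1 - r ^ 2 / 2) ≤ 2 * r * sin r * cos r :=
    mul_le_mul_of_nonneg_left one_sub_sq_div_two_le_cos (by positivity)
  have hat_cos : 2 * sin r ^ 2 * (1 + cos r ^ 2) ≤ (r + cos r * sin r) ^ 2 := by
    nlinarith [sin_quartic_nonneg hr hr1, sin_sq_add_cos_sq r]
  -- the increment of `c ↦ (r + c sin r)² - 2 sin² r (1 + c²)` from `cos r` to `c`
  have hmono : 0 ≤ (c - cos r) * sin r * (2 * r - sin r * (c + cos r)) := by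
    have := cos_le_one r
    have : 0 ≤ c - cos r := sub_nonneg.2 hc
    have : sin r * (c + cos r) ≤ 2 * r := by nlinarith
    positivity
  linarith

variable {x r : ℝ}

lemma energy_le_straight (hr : 0 < r) (h2x : 0 ≤ cos (2 * x)) :
    2 * sin r ^ 2 * (3 * r + cos (2 * x) * (sin r * cos r)) ≤
      r * ((2 * r) ^ 2 + (sin (x + r) - sin (x - r)) ^ 2) := by
  have hdiff : (sin (x + r) - sin (x - r)) ^ 2 = 2 * (1 + cos (2 * x)) * sin r ^ 2 := by
    rw [sin_add, sin_sub, cos_two_mul]; ring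
  have hsq : 0 ≤ r ^ 2 - sin r ^ 2 := sub_nonneg.2 sin_sq_le_sq
  have hsc : 0 ≤ r - sin r * cos r := sub_nonneg.2 (sin_mul_cos_le_self hr.le)
  rw [hdiff, ← sub_nonneg]
  have hid : r * ((2 * r) ^ 2 + 2 * (1 + cos (2 * x)) * sin r ^ 2) -
      2 * sin r ^ 2 * (3 * r + cos (2 * x) * (sin r * cos r)) =
      4 * r * (r ^ 2 - sin r ^ 2) + 2 * cos (2 * x) * sin r ^ 2 * (r - sin r * cos r) := by
    ring
  rw [hid]
  positivity

lemma energy_le_crossed (hr : 0 < r) (hr1 : r ≤ 1) (hx : |x| ≤ r) (h2x : 0 ≤ cos (2 * x)) :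
    2 * sin r ^ 2 * (3 * r + cos (2 * x) * (sin r * cos r)) ≤
      r * ((sin (x + r) - (x - r)) ^ 2 + ((x + r) - sin (x - r)) ^ 2) := by
  have hcos : cos r ≤ cos x := by
    rw [← cos_abs x]
    exact cos_le_cos_of_nonneg_of_le_pi (abs_nonneg x) (by linarith [pi_gt_three]) hx
  have hqm : 2 * (r + cos x * sin r) ^ 2 ≤
      (sin (x + r) - (x - r)) ^ 2 + ((x + r) - sin (x - r)) ^ 2 := by
    have hsum : 2 * (r + cos x * sin r) = (sin (x + r) - (x - r)) + ((x + r) - sin (x - r)) := by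
      rw [sin_add, sin_sub]; ring
    rw [show 2 * (r + cos x * sin r) ^ 2 = (2 * (r + cos x * sin r)) ^ 2 / 2 by ring, hsum]
    linarith [sq_nonneg ((sin (x + r) - (x - r)) - ((x + r) - sin (x - r)))]
  have henergy : 3 * r + cos (2 * x) * (sin r * cos r) ≤ 2 * r * (1 + cos x ^ 2) := by
    have := mul_le_mul_of_nonneg_left (sin_mul_cos_le_self hr.le) h2x
    rw [cos_two_mul] at this ⊢
    linarith
  calc 2 * sin r ^ 2 * (3 * r + cos (2 * x) * (sin r * cos r))
      ≤ 2 * sin r ^ 2 * (2 * r * (1 + cos x ^ 2)) :=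
        mul_le_mul_of_nonneg_left henergy (by positivity)
    _ = 2 * r * (2 * sin r ^ 2 * (1 + cos x ^ 2)) := by ring
    _ ≤ 2 * r * (r + cos x * sin r) ^ 2 :=
        mul_le_mul_of_nonneg_left
          (two_mul_sin_sq_mul_one_add_sq_le hr hr1 hcos (cos_le_one x)) (by positivity)
    _ ≤ r * ((sin (x + r) - (x - r)) ^ 2 + ((x + r) - sin (x - r)) ^ 2) := by
        linarith [mul_le_mul_of_nonneg_left hqm hr.le]

lemma le_sq_div_sq_mul_div_iff {r s E D : ℝ} (hr : 0 < r) (hs : s ≠ 0) :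
    E ≤ r ^ 2 / s ^ 2 * (D / (2 * r)) ↔ 2 * s ^ 2 * E ≤ r * D := by
  rw [show r ^ 2 / s ^ 2 * (D / (2 * r)) = r * D / (2 * s ^ 2) by field_simp,
    le_div_iff₀ (by positivity), mul_comm E]

/-- The two-valued function `u(x) = [[x]] + [[sin x]]` on `(-π/4, π/4)` is a Dirichlet
`ω`-minimizer with gauge `ω(r) = r²/(sin r)² - 1`: its Dirichlet energy `∫ (1 + cos²)` over
any subinterval `(x-r, x+r)` is at most `r²/(sin r)²` times `G²/(2r)`, where `G²` is the
squared Almgren distance between the boundary values. -/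
theorem two_valued_sin_is_omega_minimizer (x r : ℝ) (hr : 0 < r)
    (h₁ : x - r ∈ Ioo (-(π / 4)) (π / 4)) (h₂ : x + r ∈ Ioo (-(π / 4)) (π / 4)) :
    ∫ s in (x - r)..(x + r), (1 + (Real.cos s) ^ 2) ≤
      (r ^ 2 / (Real.sin r) ^ 2) *
        (min ((2 * r) ^ 2 + (Real.sin (x + r) - Real.sin (x - r)) ^ 2)
             ((Real.sin (x + r) - (x - r)) ^ 2 + ((x + r) - Real.sin (x - r)) ^ 2) / (2 * r)) := by
  obtain ⟨ha, ha'⟩ := h₁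
  obtain ⟨hb, hb'⟩ := h₂
  have hr1 : r ≤ 1 := by linarith [pi_le_four]
  have hs : 0 < sin r := sin_pos_of_pos_of_lt_pi hr (by linarith [pi_pos])
  have h2x : 0 ≤ cos (2 * x) := cos_nonneg_of_mem_Icc ⟨by linarith, by linarith⟩
  rw [integral_one_add_cos_sq_symm, le_sq_div_sq_mul_div_iff hr hs.ne']
  rcases le_total ((2 * r) ^ 2 + (sin (x + r) - sin (x - r)) ^ 2)
      ((sin (x + r) - (x - r)) ^ 2 + ((x + r) - sin (x - r)) ^ 2) with h | h
  · rw [min_eq_left h]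
    exact energy_le_straight hr h2x
  · rw [min_eq_right h]
    have hab := mul_nonpos_of_crossed_le (a := x - r) (b := x + r)
      (by rwa [show x + r - (x - r) = 2 * r by ring])
    exact energy_le_crossed hr hr1 (abs_le_of_sq_le_sq (by nlinarith) hr.le) h2x
end

section
/- Let f, g : ℝ → ℝ be 1-Lipschitz functions with f ≤ g such that deriv f (x) + deriv g (x) ≥ 1 for almost every x ∈ [0,1]. Then for all 0 ≤ a < b ≤ 1, ∫_a^b ((deriv f t)² + (deriv g t)²) dt ≤ 4 · ((f b − f a)² + (g b − g a)²)/(b − a). (This is the statement that every pluri-diamond, i.e. the two-valued function u = [[f]] + [[g]] arising from such a pair, is a Dirichlet 4-quasiminimizer.) -/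
open Real Set MeasureTheory
open scoped NNReal

/-!
Since `|f'|, |g'| ≤ 1` and `f' + g' ≥ 1`, both derivatives lie in `[0, 1]`, so the energy density
`f'² + g'²` is at most `f' + g'`. Lipschitz functions are absolutely continuous, so integrating
bounds the energy by the total increment `X + Y = (f b - f a) + (g b - g a)`, and also shows
`b - a ≤ X + Y`. Hence `(X + Y) (b - a) ≤ (X + Y)² ≤ 2 (X² + Y²)`.
-/

namespace LipschitzWith

variable {f : ℝ → ℝ} {K : ℝ≥0}

theorem abs_deriv_le (hf : LipschitzWith K f) (x : ℝ) : |deriv f x| ≤ K :=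
  norm_deriv_le_of_lipschitz hf

theorem integral_deriv_eq_sub (hf : LipschitzWith K f) (a b : ℝ) :
    ∫ x in a..b, deriv f x = f b - f a :=
  (hf.lipschitzOnWith (s := uIcc a b)).absolutelyContinuousOnInterval.integral_deriv_eq_sub

theorem intervalIntegrable_deriv (hf : LipschitzWith K f) (a b : ℝ) :
    IntervalIntegrable (deriv f) volume a b :=
  (hf.lipschitzOnWith (s := uIcc a b)).absolutelyContinuousOnInterval.intervalIntegrable_deriv

theorem intervalIntegrable_deriv_sq (hf : LipschitzWith K f) (a b : ℝ) :
    IntervalIntegrable (fun x => deriv f x ^ 2) volume a b := by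
  refine (intervalIntegrable_const (c := (K : ℝ) ^ 2)).mono_fun'
    ((measurable_deriv f).pow_const 2).aestronglyMeasurable (ae_of_all _ fun x => ?_)
  simp only [norm_pow, Real.norm_eq_abs]
  exact pow_le_pow_left₀ (abs_nonneg _) (hf.abs_deriv_le x) 2

end LipschitzWith

theorem sq_add_sq_le_add_of_le_one {x y : ℝ} (hx : x ≤ 1) (hy : y ≤ 1) (hxy : 1 ≤ x + y) :
    x ^ 2 + y ^ 2 ≤ x + y := by
  nlinarith

theorem add_le_two_mul_sq_add_sq_div {X Y L : ℝ} (hL : 0 < L) (h : L ≤ X + Y) :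
    X + Y ≤ 2 * ((X ^ 2 + Y ^ 2) / L) := by
  rw [mul_div_assoc', le_div_iff₀ hL]
  nlinarith [sq_nonneg (X - Y)]

theorem pluri_diamond_is_quasiminimizer_general (f g : ℝ → ℝ)
    (hf : LipschitzWith 1 f) (hg : LipschitzWith 1 g)
    (hderiv : ∀ᵐ x ∂(volume.restrict (Icc (0 : ℝ) 1)), 1 ≤ deriv f x + deriv g x)
    (a b : ℝ) (ha : 0 ≤ a) (hab : a < b) (hb : b ≤ 1) :
    ∫ t in a..b, ((deriv f t) ^ 2 + (deriv g t) ^ 2) ≤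
      4 * (((f b - f a) ^ 2 + (g b - g a) ^ 2) / (b - a)) := by
  have hslope : ∀ᵐ x ∂(volume.restrict (Icc a b)), 1 ≤ deriv f x + deriv g x :=
    ae_restrict_of_ae_restrict_of_subset (Icc_subset_Icc ha hb) hderiv
  have hsum_int := (hf.intervalIntegrable_deriv a b).add (hg.intervalIntegrable_deriv a b)
  have hsum : ∫ t in a..b, (deriv f t + deriv g t) = (f b - f a) + (g b - g a) := by
    rw [intervalIntegral.integral_add (hf.intervalIntegrable_deriv a b)
      (hg.intervalIntegrable_deriv a b), hf.integral_deriv_eq_sub, hg.integral_deriv_eq_sub]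
  have henergy : ∫ t in a..b, ((deriv f t) ^ 2 + (deriv g t) ^ 2)
      ≤ ∫ t in a..b, (deriv f t + deriv g t) :=
    intervalIntegral.integral_mono_ae_restrict hab.le
      ((hf.intervalIntegrable_deriv_sq a b).add (hg.intervalIntegrable_deriv_sq a b)) hsum_int
      (hslope.mono fun x hx => sq_add_sq_le_add_of_le_one
        (abs_le.1 (hf.abs_deriv_le x)).2 (abs_le.1 (hg.abs_deriv_le x)).2 hx)
  have hlength : b - a ≤ ∫ t in a..b, (deriv f t + deriv g t) := by
    simpa [hab.le] using
      intervalIntegral.integral_mono_ae_restrict hab.le intervalIntegrable_const hsum_int hslope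
  have hratio_nonneg : 0 ≤ ((f b - f a) ^ 2 + (g b - g a) ^ 2) / (b - a) :=
    div_nonneg (by positivity) (sub_pos.2 hab).le
  calc ∫ t in a..b, ((deriv f t) ^ 2 + (deriv g t) ^ 2)
      ≤ ∫ t in a..b, (deriv f t + deriv g t) := henergy
    _ = (f b - f a) + (g b - g a) := hsum
    _ ≤ 2 * (((f b - f a) ^ 2 + (g b - g a) ^ 2) / (b - a)) :=
        add_le_two_mul_sq_add_sq_div (sub_pos.2 hab) (hsum ▸ hlength)
    _ ≤ 4 * (((f b - f a) ^ 2 + (g b - g a) ^ 2) / (b - a)) := by linarith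

/-- Every pluri-diamond is a Dirichlet 4-quasiminimizer: if `f ≤ g` are 1-Lipschitz with
`deriv f + deriv g ≥ 1` a.e. on `[0,1]`, then on every subinterval `(a,b)` of `[0,1]` the
Dirichlet energy of `u = [[f]] + [[g]]` is at most `4` times the squared Almgren distance
of the boundary values divided by `b - a`. -/
theorem pluri_diamond_is_quasiminimizer (f g : ℝ → ℝ)
    (hf : LipschitzWith 1 f) (hg : LipschitzWith 1 g) (hfg : ∀ x, f x ≤ g x)
    (hderiv : ∀ᵐ x ∂(volume.restrict (Icc (0 : ℝ) 1)), 1 ≤ deriv f x + deriv g x)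
    (a b : ℝ) (ha : 0 ≤ a) (hab : a < b) (hb : b ≤ 1) :
    ∫ t in a..b, ((deriv f t) ^ 2 + (deriv g t) ^ 2) ≤
      4 * (((f b - f a) ^ 2 + (g b - g a) ^ 2) / (b - a)) :=
  pluri_diamond_is_quasiminimizer_general f g hf hg hderiv a b ha hab hb
end

section
/- There exist 1-Lipschitz functions f, g : ℝ → ℝ with f ≤ g on [0,1] such that: (i) for all 0 ≤ a < b ≤ 1, ∫_a^b ((deriv f t)² + (deriv g t)²) dt ≤ 4 · ((f b − f a)² + (g b − g a)²)/(b − a) (i.e. the two-valued function u = [[f]] + [[g]] is a Dirichlet 4-quasiminimizer), and (ii) the coincidence set {x ∈ [0,1] : f x = g x} equals the ternary Cantor set. Since the ternary Cantor set has empty interior, the branch set of u is exactly the ternary Cantor set. -/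
open Real Set MeasureTheory

lemma abs_deriv_le_of_lip {f : ℝ → ℝ} (hf : LipschitzWith 1 f) (x : ℝ) :
    |deriv f x| ≤ 1 := by
  rw [← fderiv_apply_one_eq_deriv]
  calc ‖fderiv ℝ f x 1‖ ≤ ‖fderiv ℝ f x‖ * ‖(1:ℝ)‖ := (fderiv ℝ f x).le_opNorm 1
    _ ≤ 1 * 1 := by
        gcongr
        · exact norm_fderiv_le_of_lipschitz ℝ hf
        · simp
    _ = 1 := by ring

/-- There is a Dirichlet 4-quasiminimizing two-valued function `u = [[f]] + [[g]]` on `[0,1]`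
whose branch set is the ternary Cantor set: `f ≤ g` are 1-Lipschitz, the quasiminimality
inequality holds on every subinterval, and the coincidence set `{x ∈ [0,1] : f x = g x}` is
exactly the middle-thirds Cantor set. -/
theorem exists_quasiminimizer_with_cantor_branch_set :
    ∃ f g : ℝ → ℝ, LipschitzWith 1 f ∧ LipschitzWith 1 g ∧
      (∀ x ∈ Icc (0 : ℝ) 1, f x ≤ g x) ∧
      (∀ a b : ℝ, 0 ≤ a → a < b → b ≤ 1 →
        ∫ t in a..b, ((deriv f t) ^ 2 + (deriv g t) ^ 2) ≤
          4 * (((f b - f a) ^ 2 + (g b - g a) ^ 2) / (b - a))) ∧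
      {x ∈ Icc (0 : ℝ) 1 | f x = g x} = cantorSet := by
  set h : ℝ → ℝ := fun x => Metric.infDist x cantorSet with hh
  have hlip : LipschitzWith 1 h := Metric.lipschitz_infDist_pt cantorSet
  have hnonneg : ∀ x, 0 ≤ h x := fun x => Metric.infDist_nonneg
  set f : ℝ → ℝ := fun x => (x - h x) / 2 with hf
  set g : ℝ → ℝ := fun x => (x + h x) / 2 with hg
  have hflip : LipschitzWith 1 f := by
    apply LipschitzWith.of_dist_le_mul
    intro x y
    have h1 := hlip.dist_le_mul x y
    simp only [Real.dist_eq, hf, NNReal.coe_one, one_mul] at h1 ⊢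
    obtain ⟨hl, hr⟩ := abs_le.mp h1
    rw [abs_le]
    constructor <;> nlinarith [le_abs_self (x - y), neg_abs_le (x - y)]
  have hglip : LipschitzWith 1 g := by
    apply LipschitzWith.of_dist_le_mul
    intro x y
    have h1 := hlip.dist_le_mul x y
    simp only [Real.dist_eq, hg, NNReal.coe_one, one_mul] at h1 ⊢
    obtain ⟨hl, hr⟩ := abs_le.mp h1
    rw [abs_le]
    constructor <;> nlinarith [le_abs_self (x - y), neg_abs_le (x - y)]
  refine ⟨f, g, hflip, hglip, ?_, ?_, ?_⟩
  · intro x _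
    have := hnonneg x
    simp only [hf, hg]
    linarith
  · intro a b ha hab hb
    have hdf := abs_deriv_le_of_lip hflip
    have hdg := abs_deriv_le_of_lip hglip
    have hbound : ∀ t, (deriv f t) ^ 2 + (deriv g t) ^ 2 ≤ 2 := by
      intro t
      have h1 : (deriv f t) ^ 2 ≤ 1 := by
        have := hdf t; nlinarith [abs_nonneg (deriv f t), sq_abs (deriv f t)]
      have h2 : (deriv g t) ^ 2 ≤ 1 := by
        have := hdg t; nlinarith [abs_nonneg (deriv g t), sq_abs (deriv g t)]
      linarith
    have hmeas : Measurable (fun t => (deriv f t) ^ 2 + (deriv g t) ^ 2) :=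
      ((measurable_deriv f).pow_const 2).add ((measurable_deriv g).pow_const 2)
    have hintc : IntervalIntegrable (fun _ : ℝ => (2:ℝ)) volume a b :=
      intervalIntegrable_const
    have hint : IntervalIntegrable (fun t => (deriv f t) ^ 2 + (deriv g t) ^ 2) volume a b := by
      refine hintc.mono_fun hmeas.aestronglyMeasurable ?_
      filter_upwards with t
      have h0 : 0 ≤ (deriv f t) ^ 2 + (deriv g t) ^ 2 := by positivity
      simp only [Real.norm_eq_abs]
      rw [abs_of_nonneg h0]
      simpa using hbound t
    have step1 : ∫ t in a..b, ((deriv f t) ^ 2 + (deriv g t) ^ 2) ≤ ∫ _ in a..b, (2:ℝ) := by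
      apply intervalIntegral.integral_mono_on hab.le hint hintc
      intro t _; exact hbound t
    have step1' : ∫ t in a..b, ((deriv f t) ^ 2 + (deriv g t) ^ 2) ≤ 2 * (b - a) := by
      calc _ ≤ ∫ _ in a..b, (2:ℝ) := step1
        _ = 2 * (b - a) := by simp [mul_comm]
    refine step1'.trans ?_
    have hD : (0:ℝ) < b - a := by linarith
    have hfb : f b - f a = ((b - a) - (h b - h a)) / 2 := by simp only [hf]; ring
    have hgb : g b - g a = ((b - a) + (h b - h a)) / 2 := by simp only [hg]; ring
    rw [hfb, hgb, ← mul_div_assoc, le_div_iff₀ hD]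
    nlinarith [sq_nonneg (h b - h a)]
  · ext x
    simp only [mem_setOf_eq, mem_Icc]
    constructor
    · rintro ⟨⟨h0, h1⟩, hfg⟩
      have : h x = 0 := by
        simp only [hf, hg] at hfg
        linarith
      exact (isClosed_cantorSet.mem_iff_infDist_zero ⟨0, zero_mem_cantorSet⟩).mpr this
    · intro hx
      have hx01 := cantorSet_subset_unitInterval hx
      have : h x = 0 := Metric.infDist_zero_of_mem hx
      refine ⟨hx01, ?_⟩
      simp only [hf, hg, this]
      ring
end

section
/- Let K ≥ 1 and let f, g : ℝ → ℝ be Lipschitz functions with f ≤ g on (−1,1). Then the following are equivalent: (i) for every interval [a,b] ⊂ (−1,1) and every pair of Lipschitz functions F, G : [a,b] → ℝ with F ≤ G, F(a) = f(a), G(a) = g(a), F(b) = f(b), G(b) = g(b), one has ∫_a^b ((deriv f)² + (deriv g)²) ≤ K · ∫_a^b ((deriv F)² + (deriv G)²); (ii) for every interval [a,b] ⊂ (−1,1), one has ∫_a^b ((deriv f)² + (deriv g)²) ≤ K · ((f b − f a)² + (g b − g a)²)/(b − a). (This is the one-dimensional, two-valued characterization: u = [[f]] + [[g]] is a Dirichlet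 K-quasiminimizer if and only if Dir(u,(a,b)) ≤ K · G²(u(b), u(a))/(b − a) for every subinterval.) -/
open Real Set MeasureTheory

/-!
A Lipschitz function `F` is absolutely continuous, so `∫_a^b F' = F b - F a`, and Cauchy–Schwarz
gives `(F b - F a)² / (b - a) ≤ ∫_a^b F'²`. Hence every admissible competitor pair has energy at
least `G²(u(b), u(a)) / (b - a)`, and the affine interpolants of `f` and `g` on `[a, b]` attain this
bound; they are again ordered because `f ≤ g` at both endpoints.
-/

open AffineMap

theorem AbsolutelyContinuousOnInterval.sq_sub_div_le_integral_deriv_sq {F : ℝ → ℝ} {a b : ℝ}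
    (hF : AbsolutelyContinuousOnInterval F a b)
    (hF2 : IntervalIntegrable (fun t => deriv F t ^ 2) volume a b) (hab : a < b) :
    (F b - F a) ^ 2 / (b - a) ≤ ∫ t in a..b, deriv F t ^ 2 := by
  -- Cauchy–Schwarz in the form `0 ≤ ∫ (F' - c)²`, with `c` the mean slope.
  set c := (F b - F a) / (b - a)
  have hc : c * (b - a) = F b - F a := div_mul_cancel₀ _ (sub_pos.2 hab).ne'
  have hF1 : IntervalIntegrable (fun t => 2 * c * deriv F t) volume a b :=
    hF.intervalIntegrable_deriv.const_mul _
  have hexpand : ∫ t in a..b, (deriv F t - c) ^ 2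
      = (∫ t in a..b, deriv F t ^ 2) - 2 * c * (F b - F a) + c ^ 2 * (b - a) := by
    simp_rw [show ∀ x, (x - c) ^ 2 = x ^ 2 - 2 * c * x + c ^ 2 from fun x => by ring]
    rw [intervalIntegral.integral_add (hF2.sub hF1) intervalIntegrable_const,
      intervalIntegral.integral_sub hF2 hF1, intervalIntegral.integral_const_mul,
      hF.integral_deriv_eq_sub, intervalIntegral.integral_const, smul_eq_mul]
    ring
  have hmean : (F b - F a) ^ 2 / (b - a) = c * (F b - F a) := by
    rw [← hc]; field_simp
  have hvar : 0 ≤ ∫ t in a..b, (deriv F t - c) ^ 2 :=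
    intervalIntegral.integral_nonneg hab.le fun _ _ => sq_nonneg _
  rw [hexpand, ← hc] at hvar
  rw [hmean, ← hc]
  nlinarith

theorem LipschitzWith.intervalIntegrable_deriv_sq_s9 {L : NNReal} {F : ℝ → ℝ}
    (hF : LipschitzWith L F) (a b : ℝ) :
    IntervalIntegrable (fun t => deriv F t ^ 2) volume a b :=
  intervalIntegrable_iff.2 <| IntegrableOn.of_bound measure_Ioc_lt_top
    ((measurable_deriv F).pow_const 2).aestronglyMeasurable (L ^ 2) <| ae_of_all _ fun _ => by
      simpa using pow_le_pow_left₀ (norm_nonneg _) (norm_deriv_le_of_lipschitz hF) 2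

theorem LipschitzWith.sq_sub_add_sq_sub_div_le_integral {LF LG : NNReal} {F G : ℝ → ℝ}
    (hF : LipschitzWith LF F) (hG : LipschitzWith LG G) {a b : ℝ} (hab : a < b) :
    ((F b - F a) ^ 2 + (G b - G a) ^ 2) / (b - a) ≤
      ∫ t in a..b, (deriv F t ^ 2 + deriv G t ^ 2) := by
  rw [intervalIntegral.integral_add (hF.intervalIntegrable_deriv_sq_s9 a b)
    (hG.intervalIntegrable_deriv_sq_s9 a b), add_div]
  exact add_le_add
    (hF.lipschitzOnWith.absolutelyContinuousOnInterval.sq_sub_div_le_integral_deriv_sq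
      (hF.intervalIntegrable_deriv_sq_s9 a b) hab)
    (hG.lipschitzOnWith.absolutelyContinuousOnInterval.sq_sub_div_le_integral_deriv_sq
      (hG.intervalIntegrable_deriv_sq_s9 a b) hab)

noncomputable def affineInterpolant (f : ℝ → ℝ) (a b t : ℝ) : ℝ := f a + slope f a b * (t - a)

section affineInterpolant

variable {f g : ℝ → ℝ} {a b : ℝ}

theorem affineInterpolant_left : affineInterpolant f a b a = f a := by
  simp [affineInterpolant]

theorem affineInterpolant_right (hab : a ≠ b) : affineInterpolant f a b b = f b := by
  rw [affineInterpolant, slope_def_field, div_mul_cancel₀ _ (sub_ne_zero.2 hab.symm)]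
  ring

theorem hasDerivAt_affineInterpolant (t : ℝ) :
    HasDerivAt (affineInterpolant f a b) (slope f a b) t := by
  unfold affineInterpolant
  simpa using (((hasDerivAt_id t).sub_const a).const_mul (slope f a b)).const_add (f a)

theorem lipschitzWith_affineInterpolant :
    LipschitzWith ‖slope f a b‖₊ (affineInterpolant f a b) :=
  lipschitzWith_of_nnnorm_deriv_le (fun t => (hasDerivAt_affineInterpolant t).differentiableAt)
    fun t => (hasDerivAt_affineInterpolant t).deriv ▸ le_rfl

theorem affineInterpolant_eq_lineMap (t : ℝ) :
    affineInterpolant f a b t = lineMap (f a) (f b) ((t - a) / (b - a)) := by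
  rw [affineInterpolant, lineMap_apply_ring', slope_def_field]
  ring

theorem affineInterpolant_le_affineInterpolant (hab : a < b) (ha : f a ≤ g a) (hb : f b ≤ g b)
    {t : ℝ} (ht : t ∈ Icc a b) : affineInterpolant f a b t ≤ affineInterpolant g a b t := by
  have hba : 0 < b - a := sub_pos.2 hab
  rw [affineInterpolant_eq_lineMap, affineInterpolant_eq_lineMap]
  exact lineMap_mono_endpoints ha hb (div_nonneg (sub_nonneg.2 ht.1) hba.le)
    ((div_le_one hba).2 (sub_le_sub_right ht.2 a))

theorem integral_deriv_sq_add_deriv_sq_affineInterpolant (hab : a ≠ b) :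
    ∫ t in a..b, (deriv (affineInterpolant f a b) t ^ 2 + deriv (affineInterpolant g a b) t ^ 2)
      = ((f b - f a) ^ 2 + (g b - g a) ^ 2) / (b - a) := by
  simp only [fun t => (hasDerivAt_affineInterpolant (f := f) (a := a) (b := b) t).deriv,
    fun t => (hasDerivAt_affineInterpolant (f := g) (a := a) (b := b) t).deriv,
    intervalIntegral.integral_const, smul_eq_mul, slope_def_field]
  field_simp [sub_ne_zero.2 hab.symm]

end affineInterpolant

theorem quasiminimizer_characterization_one_dim_general (K : ℝ) (hK : 1 ≤ K) (f g : ℝ → ℝ)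
    (hfg : ∀ x ∈ Ioo (-1 : ℝ) 1, f x ≤ g x) :
    (∀ a b : ℝ, -1 < a → a < b → b < 1 →
      ∀ F G : ℝ → ℝ, (∃ L, LipschitzWith L F) → (∃ L, LipschitzWith L G) →
        (∀ x ∈ Icc a b, F x ≤ G x) →
        F a = f a → G a = g a → F b = f b → G b = g b →
        ∫ t in a..b, ((deriv f t) ^ 2 + (deriv g t) ^ 2) ≤
          K * ∫ t in a..b, ((deriv F t) ^ 2 + (deriv G t) ^ 2)) ↔
    (∀ a b : ℝ, -1 < a → a < b → b < 1 →
      ∫ t in a..b, ((deriv f t) ^ 2 + (deriv g t) ^ 2) ≤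
        K * (((f b - f a) ^ 2 + (g b - g a) ^ 2) / (b - a))) := by
  constructor
  · intro hquasi a b ha hab hb
    have hfg_a := hfg a ⟨ha, hab.trans hb⟩
    have hfg_b := hfg b ⟨ha.trans hab, hb⟩
    rw [← integral_deriv_sq_add_deriv_sq_affineInterpolant hab.ne]
    exact hquasi a b ha hab hb _ _ ⟨_, lipschitzWith_affineInterpolant⟩
      ⟨_, lipschitzWith_affineInterpolant⟩
      (fun _ => affineInterpolant_le_affineInterpolant hab hfg_a hfg_b)
      affineInterpolant_left affineInterpolant_left
      (affineInterpolant_right hab.ne) (affineInterpolant_right hab.ne)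
  · rintro hbound a b ha hab hb F G ⟨LF, hF⟩ ⟨LG, hG⟩ - hFa hGa hFb hGb
    calc _ ≤ K * (((F b - F a) ^ 2 + (G b - G a) ^ 2) / (b - a)) := by
          rw [hFa, hGa, hFb, hGb]; exact hbound a b ha hab hb
      _ ≤ K * ∫ t in a..b, ((deriv F t) ^ 2 + (deriv G t) ^ 2) :=
        mul_le_mul_of_nonneg_left (hF.sq_sub_add_sq_sub_div_le_integral hG hab) (by linarith)

/-- One-dimensional, two-valued characterization of Dirichlet quasiminimizers:
`u = [[f]] + [[g]]` is a Dirichlet `K`-quasiminimizer on `(-1,1)` (its energy on each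
subinterval is at most `K` times the energy of any Lipschitz competitor with the same
boundary values) if and only if on each subinterval `[a,b] ⊂ (-1,1)` its energy is at most
`K · G²(u(b), u(a))/(b - a)`. -/
theorem quasiminimizer_characterization_one_dim (K : ℝ) (hK : 1 ≤ K) (f g : ℝ → ℝ)
    (hf : ∃ L, LipschitzWith L f) (hg : ∃ L, LipschitzWith L g)
    (hfg : ∀ x ∈ Ioo (-1 : ℝ) 1, f x ≤ g x) :
    (∀ a b : ℝ, -1 < a → a < b → b < 1 →
      ∀ F G : ℝ → ℝ, (∃ L, LipschitzWith L F) → (∃ L, LipschitzWith L G) →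
        (∀ x ∈ Icc a b, F x ≤ G x) →
        F a = f a → G a = g a → F b = f b → G b = g b →
        ∫ t in a..b, ((deriv f t) ^ 2 + (deriv g t) ^ 2) ≤
          K * ∫ t in a..b, ((deriv F t) ^ 2 + (deriv G t) ^ 2)) ↔
    (∀ a b : ℝ, -1 < a → a < b → b < 1 →
      ∫ t in a..b, ((deriv f t) ^ 2 + (deriv g t) ^ 2) ≤
        K * (((f b - f a) ^ 2 + (g b - g a) ^ 2) / (b - a))) :=
  quasiminimizer_characterization_one_dim_general K hK f g hfg
end
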